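/- Let T : D(T) ⊆ H → H be a closed, densely defined self-adjoint Fredholm operator with compact resolvent (equivalently, (T+i)⁻¹ compact). Then the unitary U with Cayley graph equal to the switched graph of T satisfies U − 1 compact; i.e., the switched graph of T lies in the space of lagrangians commensurable with the horizontal space H⁺. More generally, for a two-sided ideal 𝓘 containing the finite-rank operators, the switched graph of T satisfies U − 1 ∈ 𝓘 if and only if the resolvent (T+i)⁻¹ ∈ 𝓘. -/

import Mathlib

/-! The Cayley graph of `U` contains `((1 + U) v, -i (1 - U) v)`; if this is the point `(T w, w)`
of the switched graph, then `(T + i) w = 2 v`, so `w = 2 R v` and hence `U - 1 = -2i R`.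
Both claims follow, since a two-sided ideal and the compact operators are closed under
multiplication by nonzero scalars. -/

noncomputable section

variable (H : Type) [NormedAddCommGroup H] [InnerProductSpace ℂ H] [CompleteSpace H]

/-- `Ĥ = H ⊕ H` with the Hilbert (l²) structure. -/
abbrev Hh := WithLp 2 (H × H)

/-- The Cayley graph map: `𝒞(U) = Ran {v ↦ ((1+U)v, -i(1-U)v)} ⊆ H ⊕ H`. -/
def cayleyGraph (U : H →L[ℂ] H) : Submodule ℂ (Hh H) :=
  LinearMap.range
    (((WithLp.prodContinuousLinearEquiv 2 ℂ H H).symm.toContinuousLinearMap ∘L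
      ((1 + U).prod ((-Complex.I) • (1 - U)))) : H →L[ℂ] Hh H).toLinearMap

/-- The switched graph `{(T v, v) : v ∈ D(T)}` of an unbounded operator `T`. -/
def switchedGraph (T : H →ₗ.[ℂ] H) : Submodule ℂ (Hh H) :=
  LinearMap.range
    (((WithLp.prodContinuousLinearEquiv 2 ℂ H H).symm.toContinuousLinearMap.toLinearMap).comp
      (T.toFun.prod T.domain.subtype))

namespace TwoSidedIdeal

variable {k A : Type*} [Field k] [Ring A] [Algebra k A]

lemma algebra_smul_mem (I : TwoSidedIdeal A) (c : k) {a : A} (ha : a ∈ I) : c • a ∈ I := by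
  rw [Algebra.smul_def]
  exact I.mul_mem_left _ _ ha

lemma smul_mem_iff_of_ne_zero (I : TwoSidedIdeal A) {c : k} (hc : c ≠ 0) (a : A) :
    c • a ∈ I ↔ a ∈ I :=
  ⟨fun h => by simpa [smul_smul, inv_mul_cancel₀ hc] using I.algebra_smul_mem c⁻¹ h,
    I.algebra_smul_mem c⟩

end TwoSidedIdeal

section CayleyGraph

open Complex

variable {E : Type} [NormedAddCommGroup E] [InnerProductSpace ℂ E]

lemma exists_domain_of_cayleyGraph_eq_switchedGraph {T : E →ₗ.[ℂ] E} {U : E →L[ℂ] E}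
    (hcg : cayleyGraph E U = switchedGraph E T) (v : E) :
    ∃ w : T.domain, T w = v + U v ∧ (w : E) = -I • (v - U v) := by
  have hv : _ ∈ cayleyGraph E U := LinearMap.mem_range_self _ v
  rw [hcg] at hv
  obtain ⟨w, hw⟩ := hv
  refine ⟨w, ?_⟩
  simpa [Prod.ext_iff] using congrArg (WithLp.prodContinuousLinearEquiv 2 ℂ E E) hw

lemma sub_one_eq_smul_resolvent {T : E →ₗ.[ℂ] E} {R U : E →L[ℂ] E}
    (hR : ∀ v : T.domain, R (T v + I • (v : E)) = v)
    (hcg : cayleyGraph E U = switchedGraph E T) :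
    U - 1 = (-(2 * I)) • R := by
  ext v
  obtain ⟨w, hTw, hw⟩ := exists_domain_of_cayleyGraph_eq_switchedGraph hcg v
  have hsum : T w + I • (w : E) = (2 : ℂ) • v := by
    rw [hTw, hw, smul_smul, mul_neg, I_mul_I, neg_neg, one_smul]
    module
  have hRv : (w : E) = (2 : ℂ) • R v := by rw [← hR w, hsum, map_smul]
  calc (U - 1) v = (-I) • (-I • (v - U v)) := by
        rw [smul_smul, neg_mul_neg, I_mul_I, neg_one_smul, neg_sub, sub_apply, one_apply_eq_self]
    _ = ((-(2 * I)) • R) v := by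
        rw [← hw, hRv, smul_smul, smul_apply, neg_mul, mul_comm]

end CayleyGraph

theorem switched_graph_commensurable_iff_resolvent_in_ideal (T : H →ₗ.[ℂ] H)
    (R : H →L[ℂ] H)
    (hR₁ : ∀ v : T.domain, R (T v + Complex.I • (v : H)) = (v : H))
    (U : H →L[ℂ] H)
    (hcg : cayleyGraph H U = switchedGraph H T)
    (𝓘 : TwoSidedIdeal (H →L[ℂ] H)) :
    (IsCompactOperator R → IsCompactOperator (U - 1 : H →L[ℂ] H)) ∧
    ((U - 1 : H →L[ℂ] H) ∈ 𝓘 ↔ R ∈ 𝓘) := by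
  rw [sub_one_eq_smul_resolvent hR₁ hcg]
  exact ⟨fun hR => hR.smul _, 𝓘.smul_mem_iff_of_ne_zero (by simp) R⟩
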